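/- arXiv:0901.0655 — 3 statements merged into one kernel-verified Lean document; each statement's English description precedes it below -/
import Mathlib

section
/- Let ξ be a nonnegative random variable with log-moment generating function φ(λ) = log E exp(λξ). Then for any r > 0, (E ξ^r)^{1/r} ≤ inf{φ(λ)/λ : λ > 0, φ(λ) ≥ r}. -/
/-!
With `p = φ(λ)`, the tangent bounds `x ≤ exp (x - 1)` and, by convexity of `exp`,
`exp (t * y) ≤ 1 - t + t * exp y` for `t = r / p ∈ [0, 1]` give pointwise
`s ^ r ≤ p ^ r * (1 - r / p + r / p * exp (s - p))` for `s ≥ 0`.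
Taking `s = λ ξ`, the right side has expectation exactly `p ^ r` because
`E exp (λ ξ - p) = 1`, so `E (λ ξ) ^ r ≤ φ(λ) ^ r`.
-/

open MeasureTheory Real

lemma rpow_le_exp_mul_sub_one {x r : ℝ} (hx : 0 ≤ x) (hr : 0 ≤ r) :
    x ^ r ≤ exp (r * (x - 1)) :=
  calc x ^ r ≤ exp (x - 1) ^ r := rpow_le_rpow hx (by linarith [add_one_le_exp (x - 1)]) hr
    _ = exp (r * (x - 1)) := by rw [← exp_mul, mul_comm]

lemma exp_mul_le_one_sub_add_mul_exp {t : ℝ} (x : ℝ) (ht₀ : 0 ≤ t) (ht₁ : t ≤ 1) :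
    exp (t * x) ≤ 1 - t + t * exp x := by
  simpa using convexOn_exp.2 (Set.mem_univ 0) (Set.mem_univ x) (sub_nonneg.2 ht₁) ht₀ (by ring)

lemma rpow_le_mul_one_sub_add_mul_exp_sub {r p s : ℝ} (hr : 0 < r) (hrp : r ≤ p)
    (hs : 0 ≤ s) :
    s ^ r ≤ p ^ r * (1 - r / p + r / p * exp (s - p)) := by
  have hp : 0 < p := hr.trans_le hrp
  calc s ^ r = p ^ r * (s / p) ^ r := by
        rw [← mul_rpow hp.le (by positivity), mul_div_cancel₀ s hp.ne']
    _ ≤ p ^ r * exp (r / p * (s - p)) := by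
        gcongr
        refine (rpow_le_exp_mul_sub_one (div_nonneg hs hp.le) hr.le).trans_eq ?_
        congr 1
        field_simp
    _ ≤ p ^ r * (1 - r / p + r / p * exp (s - p)) := by
        gcongr
        exact exp_mul_le_one_sub_add_mul_exp _ (by positivity) ((div_le_one hp).2 hrp)

lemma integral_rpow_le_of_integral_exp_eq {Ω : Type*} [MeasurableSpace Ω] {μ : Measure Ω}
    [IsProbabilityMeasure μ] {X : Ω → ℝ} (hX : ∀ ω, 0 ≤ X ω)
    (hint : Integrable (fun ω => exp (X ω)) μ) {r p : ℝ} (hr : 0 < r) (hrp : r ≤ p)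
    (hexp : ∫ ω, exp (X ω) ∂μ = exp p) :
    ∫ ω, X ω ^ r ∂μ ≤ p ^ r := by
  set bound : Ω → ℝ := fun ω => p ^ r * (1 - r / p + r / p * exp (X ω - p))
  have hbound_int : Integrable bound μ := by
    simp only [bound, exp_sub]
    exact ((integrable_const _).add ((hint.div_const _).const_mul _)).const_mul _
  have hX_meas : AEMeasurable X μ :=
    hint.aemeasurable.log.congr (ae_of_all _ fun ω => log_exp (X ω))
  have hpow_int : Integrable (fun ω => X ω ^ r) μ :=
    hbound_int.mono' (hX_meas.pow_const r).aestronglyMeasurable <| ae_of_all _ fun ω => by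
      rw [norm_of_nonneg (rpow_nonneg (hX ω) r)]
      exact rpow_le_mul_one_sub_add_mul_exp_sub hr hrp (hX ω)
  have hbound_integral : ∫ ω, bound ω ∂μ = p ^ r := by
    simp only [bound, exp_sub]
    rw [integral_const_mul, integral_add (integrable_const _) ((hint.div_const _).const_mul _),
      integral_const_mul, integral_div, hexp, div_self (exp_ne_zero p), integral_const,
      probReal_univ]
    simp only [smul_eq_mul, one_mul]
    ring
  calc ∫ ω, X ω ^ r ∂μ ≤ ∫ ω, bound ω ∂μ :=
        integral_mono hpow_int hbound_int fun ω =>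
          rpow_le_mul_one_sub_add_mul_exp_sub hr hrp (hX ω)
    _ = p ^ r := hbound_integral

theorem stmt0_general {Ω : Type*} [MeasurableSpace Ω] (μ : Measure Ω) [IsProbabilityMeasure μ]
    (ξ : Ω → ℝ) (hξ : ∀ ω, 0 ≤ ξ ω) (r : ℝ) (hr : 0 < r)
    (φ : ℝ → ℝ) (hφ : ∀ l : ℝ, φ l = Real.log (∫ ω, Real.exp (l * ξ ω) ∂μ)) :
    ∀ l : ℝ, 0 < l → Integrable (fun ω => Real.exp (l * ξ ω)) μ → r ≤ φ l →
      (∫ ω, ξ ω ^ r ∂μ) ^ (1 / r) ≤ φ l / l := by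
  intro l hl hint hrl
  have hexp : ∫ ω, exp (l * ξ ω) ∂μ = exp (φ l) := by
    rw [hφ l, exp_log (integral_exp_pos hint)]
  have hscaled : ∫ ω, (l * ξ ω) ^ r ∂μ ≤ φ l ^ r :=
    integral_rpow_le_of_integral_exp_eq (fun ω => mul_nonneg hl.le (hξ ω)) hint hr hrl hexp
  simp only [mul_rpow hl.le (hξ _), integral_const_mul] at hscaled
  rw [one_div, rpow_inv_le_iff_of_pos (integral_nonneg fun ω => rpow_nonneg (hξ ω) r)
    (div_nonneg (hr.trans_le hrl).le hl.le) hr, div_rpow (hr.trans_le hrl).le hl.le,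
    le_div_iff₀ (rpow_pos_of_pos hl r)]
  linarith

/-- For a nonnegative random variable `ξ` with log-moment generating
function `φ(λ) = log E exp(λξ)`, for any `r > 0` and any `λ > 0` such that
`exp(λξ)` is integrable (`φ(λ)` finite) and `φ(λ) ≥ r`, one has
`(E ξ^r)^(1/r) ≤ φ(λ)/λ`; i.e. `(E ξ^r)^(1/r)` is bounded by the infimum of
`φ(λ)/λ` over such `λ`. -/
theorem stmt0 {Ω : Type*} [MeasurableSpace Ω] (μ : Measure Ω) [IsProbabilityMeasure μ]
    (ξ : Ω → ℝ) (hξm : Measurable ξ) (hξ : ∀ ω, 0 ≤ ξ ω) (r : ℝ) (hr : 0 < r)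
    (φ : ℝ → ℝ) (hφ : ∀ l : ℝ, φ l = Real.log (∫ ω, Real.exp (l * ξ ω) ∂μ)) :
    ∀ l : ℝ, 0 < l → Integrable (fun ω => Real.exp (l * ξ ω)) μ → r ≤ φ l →
      (∫ ω, ξ ω ^ r ∂μ) ^ (1 / r) ≤ φ l / l :=
  stmt0_general μ ξ hξ r hr φ hφ
end

section
/- In the linear Gaussian model Y = Xθ₀ + σε with log-likelihood ratio L(θ,θ₀) = ⟨X(θ−θ₀), ε⟩/σ − ‖X(θ−θ₀)‖²/(2σ²), and with μ*(θ) = 1/2, 𝔐*(θ,θ₀) = ‖X(θ−θ₀)‖²/(8σ²), it holds for any 0 ≤ s < 1 that sup_{θ∈ℝ^p} {L(θ,θ₀)/2 + s𝔐*(θ,θ₀)} = ‖Πε‖²/(4−2s), where Π is the orthogonal projection onto the column space of X. -/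
open Real Matrix

lemma stmt13_aux (σ s A B E : ℝ) (hσ : 0 < σ) (hs : s < 2)
    (hkey : 0 ≤ (2 - s) ^ 2 * B - 4 * σ * (2 - s) * A + 4 * σ ^ 2 * E) :
    (A / σ - B / (2 * σ ^ 2)) / 2 + s * B / (8 * σ ^ 2) ≤ E / (4 - 2 * s) := by
  have h4 : (0:ℝ) < 4 - 2 * s := by linarith
  have key : E / (4 - 2 * s) - ((A / σ - B / (2 * σ ^ 2)) / 2 + s * B / (8 * σ ^ 2))
      = ((2 - s) ^ 2 * B - 4 * σ * (2 - s) * A + 4 * σ ^ 2 * E) / (4 * σ ^ 2 * (4 - 2 * s)) := by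
    field_simp
    ring
  have hpos : 0 ≤ ((2 - s) ^ 2 * B - 4 * σ * (2 - s) * A + 4 * σ ^ 2 * E)
      / (4 * σ ^ 2 * (4 - 2 * s)) :=
    div_nonneg hkey (mul_nonneg (by positivity) h4.le)
  linarith [key ▸ hpos]

/-- In the linear Gaussian model with
`L(θ,θ₀) = ⟨X(θ-θ₀), ε⟩/σ - ‖X(θ-θ₀)‖²/(2σ²)`, `μ*(θ) = 1/2` and
`𝔐*(θ,θ₀) = ‖X(θ-θ₀)‖²/(8σ²)`, for any `0 ≤ s < 1`,
`sup_θ {L(θ,θ₀)/2 + s 𝔐*(θ,θ₀)} = ‖Πε‖²/(4-2s)` where `Π` is the orthogonal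
projection onto the column space of `X`. -/
theorem stmt13 (n p : ℕ) (X : Matrix (Fin n) (Fin p) ℝ) (σ : ℝ) (hσ : 0 < σ)
    (ε : Fin n → ℝ) (θ₀ : Fin p → ℝ)
    (P : Matrix (Fin n) (Fin n) ℝ) (hproj : P * P = P) (hsymm : Pᵀ = P)
    (hfix : ∀ u : Fin p → ℝ, P.mulVec (X.mulVec u) = X.mulVec u)
    (hrange : ∀ v : Fin n → ℝ, ∃ u : Fin p → ℝ, P.mulVec v = X.mulVec u)
    (s : ℝ) (hs0 : 0 ≤ s) (hs1 : s < 1) :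
    (⨆ θ : Fin p → ℝ,
        ((X.mulVec (θ - θ₀)) ⬝ᵥ ε / σ - (∑ i, (X.mulVec (θ - θ₀) i) ^ 2) / (2 * σ ^ 2)) / 2
          + s * (∑ i, (X.mulVec (θ - θ₀) i) ^ 2) / (8 * σ ^ 2))
      = (∑ i, (P.mulVec ε i) ^ 2) / (4 - 2 * s) := by
  have hs2 : (0:ℝ) < 2 - s := by linarith
  set t : ℝ := 2 * σ / (2 - s) with ht
  set E : ℝ := ∑ i, (P.mulVec ε i) ^ 2 with hE
  -- adjointness of P
  have hadj : ∀ v w : Fin n → ℝ, v ⬝ᵥ P.mulVec w = (P.mulVec v) ⬝ᵥ w := by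
    intro v w
    rw [dotProduct_mulVec, ← hsymm, vecMul_transpose, hsymm]
  -- upper bound for each θ
  have hub : ∀ θ : Fin p → ℝ,
      ((X.mulVec (θ - θ₀)) ⬝ᵥ ε / σ - (∑ i, (X.mulVec (θ - θ₀) i) ^ 2) / (2 * σ ^ 2)) / 2
        + s * (∑ i, (X.mulVec (θ - θ₀) i) ^ 2) / (8 * σ ^ 2) ≤ E / (4 - 2 * s) := by
    intro θ
    set w : Fin n → ℝ := X.mulVec (θ - θ₀) with hw
    have hA : w ⬝ᵥ ε = w ⬝ᵥ P.mulVec ε := by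
      conv_lhs => rw [hw, ← hfix (θ - θ₀)]
      rw [← hw]
      exact (hadj w ε).symm
    set A : ℝ := w ⬝ᵥ ε with hA'
    set B : ℝ := ∑ i, w i ^ 2 with hB
    have hsq : (0:ℝ) ≤ ∑ i, (w i - t * P.mulVec ε i) ^ 2 :=
      Finset.sum_nonneg fun i _ => sq_nonneg _
    have hexp : ∑ i, (w i - t * P.mulVec ε i) ^ 2
        = B - 2 * t * (w ⬝ᵥ P.mulVec ε) + t ^ 2 * E := by
      rw [hB, hE, dotProduct, Finset.mul_sum, Finset.mul_sum, ← Finset.sum_sub_distrib,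
        ← Finset.sum_add_distrib]
      exact Finset.sum_congr rfl fun i _ => by ring
    rw [hexp, ← hA] at hsq
    apply stmt13_aux _ _ _ _ _ hσ (by linarith)
    have h1 : 0 ≤ (2 - s) ^ 2 * (B - 2 * t * A + t ^ 2 * E) :=
      mul_nonneg (sq_nonneg _) hsq
    have h2 : (2 - s) ^ 2 * (B - 2 * t * A + t ^ 2 * E)
        = (2 - s) ^ 2 * B - 4 * σ * (2 - s) * A + 4 * σ ^ 2 * E := by
      rw [ht]; field_simp; ring
    linarith [h2 ▸ h1]
  -- the supremum is attained
  obtain ⟨u, hu⟩ := hrange (t • ε)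
  have hXu : X.mulVec u = t • P.mulVec ε := by rw [← hu, Matrix.mulVec_smul]
  have hPee : (P.mulVec ε) ⬝ᵥ ε = E := by
    have h1 : P.mulVec (P.mulVec ε) = P.mulVec ε := by
      rw [Matrix.mulVec_mulVec, hproj]
    calc (P.mulVec ε) ⬝ᵥ ε = (P.mulVec (P.mulVec ε)) ⬝ᵥ ε := by rw [h1]
      _ = (P.mulVec ε) ⬝ᵥ (P.mulVec ε) := by rw [← hadj]
      _ = E := by rw [hE, dotProduct]; exact Finset.sum_congr rfl fun i _ => (sq _).symm
  have hval : ((X.mulVec ((θ₀ + u) - θ₀)) ⬝ᵥ ε / σ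
        - (∑ i, (X.mulVec ((θ₀ + u) - θ₀) i) ^ 2) / (2 * σ ^ 2)) / 2
        + s * (∑ i, (X.mulVec ((θ₀ + u) - θ₀) i) ^ 2) / (8 * σ ^ 2) = E / (4 - 2 * s) := by
    have hsub : (θ₀ + u) - θ₀ = u := by ext i; simp
    rw [hsub, hXu]
    have hd : (t • P.mulVec ε) ⬝ᵥ ε = t * E := by rw [smul_dotProduct, smul_eq_mul, hPee]
    have hsum : (∑ i, ((t • P.mulVec ε) i) ^ 2) = t ^ 2 * E := by
      rw [hE, Finset.mul_sum]
      exact Finset.sum_congr rfl fun i _ => by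
        simp only [Pi.smul_apply, smul_eq_mul]; ring
    rw [hd, hsum, ht]
    have h4 : (4 : ℝ) - 2 * s ≠ 0 := by linarith
    field_simp
    ring
  refine le_antisymm (ciSup_le hub) ?_
  rw [← hval]
  exact le_ciSup ⟨E / (4 - 2 * s), by rintro x ⟨θ, rfl⟩; exact hub θ⟩ (θ₀ + u)
end

section
/- Let Y be a real random variable with median 0 and symmetric positive density, and for y > 0 set λ(y) = −(2y)^{-1} log[2P(Y > y)], assumed positive and monotonically decreasing. Then for θ > 0, with ℓ(y,θ,0) = |y| − |y−θ|, it holds E exp{λ(θ)ℓ(Y,θ,0)} ≤ (1 + θλ(θ)) e^{−θλ(θ)}, and hence the rate function 𝔪(θ,0) = −log E exp{λ(θ)ℓ(Y,θ,0)} satisfies 𝔪(θ,0) ≥ θλ(θ) − log(1 + θλ(θ)). -/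
/-!
With `m = λ(θ)` and `a = exp(-θm)`, the variable `W = exp(m ℓ(Y,θ,0))` takes values in `[a, 1/a]`.
Since `ℓ(y,θ,0) ≤ max(-θ, 2y - θ)`, the event `W > s` forces `Y > y₀ := (log s / m + θ) / 2`,
a point of `(0, θ]`, where monotonicity of `λ` gives `P(Y > y₀) ≤ exp(-2 y₀ m) / 2 = a / (2s)`.
The layer-cake formula then yields `E W ≤ a + ∫_a^{1/a} a / (2s) ds = a (1 + θm)`.
-/

open MeasureTheory Real Set

theorem integral_le_add_mul_log_of_meas_gt_le {Ω : Type*} [MeasurableSpace Ω] {μ : Measure Ω}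
    [IsFiniteMeasure μ] {W : Ω → ℝ} {a b C : ℝ} (ha : 0 < a) (hab : a ≤ b)
    (hW : Integrable W μ) (hWa : ∀ᵐ ω ∂μ, a ≤ W ω) (hWb : ∀ᵐ ω ∂μ, W ω ≤ b)
    (htail : ∀ s ∈ Ioc a b, μ.real {ω | s < W ω} ≤ C / s) :
    ∫ ω, W ω ∂μ ≤ μ.real univ * a + C * log (b / a) := by
  have hshift : ∫ ω, W ω ∂μ = ∫ ω, (W ω - a) ∂μ + μ.real univ * a := by
    rw [integral_sub hW (integrable_const a), integral_const, smul_eq_mul]; ring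
  have hlayer : ∫ ω, (W ω - a) ∂μ = ∫ t in Ioc 0 (b - a), μ.real {ω | t < W ω - a} := by
    rw [Integrable.integral_eq_integral_Ioc_meas_le (f := fun ω => W ω - a)
      (hW.sub (integrable_const a))
      (by filter_upwards [hWa] with ω h using sub_nonneg.mpr h)
      (by filter_upwards [hWb] with ω h using sub_le_sub_right h a)]
    refine integral_congr_ae ?_
    filter_upwards [meas_le_ae_eq_meas_lt μ (volume.restrict (Ioc 0 (b - a))) (fun ω => W ω - a)]
      with t ht using congrArg ENNReal.toReal ht
  have hbound : ∫ t in Ioc 0 (b - a), μ.real {ω | t < W ω - a}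
      ≤ ∫ t in Ioc 0 (b - a), C * (t + a)⁻¹ := by
    refine integral_mono_of_nonneg (Filter.Eventually.of_forall fun t => measureReal_nonneg) ?_ ?_
    · refine (ContinuousOn.integrableOn_Icc ?_).mono_set Ioc_subset_Icc_self
      exact continuousOn_const.mul <| (continuousOn_id.add continuousOn_const).inv₀
        fun t ht => (add_pos_of_nonneg_of_pos ht.1 ha).ne'
    · filter_upwards [ae_restrict_mem measurableSet_Ioc] with t ht
      simpa only [lt_sub_iff_add_lt, ← div_eq_mul_inv]
        using htail (t + a) ⟨by linarith [ht.1], by linarith [ht.2]⟩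
  have hlog : ∫ t in Ioc 0 (b - a), C * (t + a)⁻¹ = C * log (b / a) := by
    rw [← intervalIntegral.integral_of_le (sub_nonneg.mpr hab), intervalIntegral.integral_const_mul,
      intervalIntegral.integral_comp_add_right (fun x => x⁻¹), zero_add, sub_add_cancel,
      integral_inv_of_pos ha (ha.trans_le hab)]
  linarith

theorem abs_sub_abs_sub_mem_Icc (y θ : ℝ) : |y| - |y - θ| ∈ Icc (-|θ|) |θ| :=
  abs_le.mp (by simpa only [sub_sub_cancel] using abs_abs_sub_abs_le_abs_sub y (y - θ))

theorem abs_sub_abs_sub_le_max {θ : ℝ} (hθ : 0 ≤ θ) (y : ℝ) :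
    |y| - |y - θ| ≤ max (-θ) (2 * y - θ) := by
  rcases abs_cases y with ⟨hy, _⟩ | ⟨hy, _⟩ <;>
    rcases abs_cases (y - θ) with ⟨hz, _⟩ | ⟨hz, _⟩ <;>
    rw [hy, hz] <;>
    first | exact le_max_of_le_left (by linarith) | exact le_max_of_le_right (by linarith)

theorem measureReal_exp_mul_contrast_gt_le {Ω : Type*} [MeasurableSpace Ω] {μ : Measure Ω}
    [IsFiniteMeasure μ] {Y : Ω → ℝ} {m θ : ℝ} (hm : 0 < m)
    (hY : ∀ y ∈ Ioc 0 θ, μ.real {ω | y < Y ω} ≤ exp (-(2 * y * m)) / 2)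
    {s : ℝ} (hs : s ∈ Ioc (exp (-(θ * m))) (exp (θ * m))) :
    μ.real {ω | s < exp (m * (|Y ω| - |Y ω - θ|))} ≤ exp (-(θ * m)) / 2 / s := by
  have hs₀ : 0 < s := (exp_pos _).trans hs.1
  have hlog_lo : -θ < log s / m := by
    rw [lt_div_iff₀ hm, ← log_exp (-θ * m), neg_mul]
    exact log_lt_log (exp_pos _) hs.1
  have hlog_hi : log s / m ≤ θ := by
    rw [div_le_iff₀ hm, ← log_exp (θ * m)]
    exact log_le_log hs₀ hs.2
  have hθ : 0 ≤ θ := by linarith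
  set y₀ := (log s / m + θ) / 2 with hy₀
  have hsub : {ω | s < exp (m * (|Y ω| - |Y ω - θ|))} ⊆ {ω | y₀ < Y ω} := by
    intro ω hω
    have hlt : log s / m < |Y ω| - |Y ω - θ| := by
      rw [div_lt_iff₀ hm, mul_comm, ← log_exp (m * _)]
      exact log_lt_log hs₀ hω
    rcases lt_max_iff.mp (hlt.trans_le (abs_sub_abs_sub_le_max hθ (Y ω))) with h | h
    · linarith
    · show y₀ < Y ω; linarith
  have hexp : exp (-(2 * y₀ * m)) = exp (-(θ * m)) / s := by
    rw [show -(2 * y₀ * m) = -(θ * m) - log s by rw [hy₀]; field_simp; ring, exp_sub, exp_log hs₀]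
  calc μ.real {ω | s < exp (m * (|Y ω| - |Y ω - θ|))} ≤ μ.real {ω | y₀ < Y ω} :=
        measureReal_mono hsub
    _ ≤ exp (-(2 * y₀ * m)) / 2 := hY y₀ ⟨by linarith, by linarith⟩
    _ = exp (-(θ * m)) / 2 / s := by rw [hexp]; ring

theorem sub_log_one_add_le_neg_log {x E : ℝ} (hE : 0 < E) (h : E ≤ (1 + x) * exp (-x)) :
    x - log (1 + x) ≤ -log E := by
  have hx : 0 < 1 + x := pos_of_mul_pos_left (hE.trans_le h) (exp_pos _).le
  have := log_le_log hE h
  rw [log_mul hx.ne' (exp_ne_zero _), log_exp] at this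
  linarith

theorem stmt17_general {Ω : Type*} [MeasurableSpace Ω] (μ : Measure Ω) [IsProbabilityMeasure μ]
    (Y : Ω → ℝ) (hY : Measurable Y)
    (lam : ℝ → ℝ) (hlampos : ∀ y : ℝ, 0 < y → 0 < lam y)
    (hlammono : AntitoneOn lam (Set.Ioi (0 : ℝ)))
    (htail : ∀ y : ℝ, 0 ≤ y →
      (μ {ω | y < Y ω}).toReal = Real.exp (-(2 * y * lam y)) / 2) :
    ∀ θ : ℝ, 0 < θ →
      (∫ ω, Real.exp (lam θ * (|Y ω| - |Y ω - θ|)) ∂μ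
          ≤ (1 + θ * lam θ) * Real.exp (-(θ * lam θ))) ∧
      (θ * lam θ - Real.log (1 + θ * lam θ)
          ≤ -Real.log (∫ ω, Real.exp (lam θ * (|Y ω| - |Y ω - θ|)) ∂μ)) := by
  intro θ hθ
  set m := lam θ
  have hm : 0 < m := hlampos θ hθ
  have hYtail : ∀ y ∈ Ioc 0 θ, μ.real {ω | y < Y ω} ≤ exp (-(2 * y * m)) / 2 := by
    rintro y ⟨hy, hyθ⟩
    rw [measureReal_def, htail y hy.le]
    gcongr
    exact hlammono hy hθ hyθ
  have hW : ∀ ω, exp (m * (|Y ω| - |Y ω - θ|)) ∈ Icc (exp (-(θ * m))) (exp (θ * m)) := by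
    intro ω
    obtain ⟨hlo, hhi⟩ := abs_sub_abs_sub_mem_Icc (Y ω) θ
    rw [abs_of_pos hθ] at hlo hhi
    constructor <;> apply exp_le_exp.mpr <;> nlinarith
  have hWint : Integrable (fun ω => exp (m * (|Y ω| - |Y ω - θ|))) μ :=
    .of_bound (by fun_prop) (exp (θ * m)) <| .of_forall fun ω => by
      rw [norm_of_nonneg (exp_pos _).le]; exact (hW ω).2
  have hE := integral_le_add_mul_log_of_meas_gt_le (exp_pos _) (exp_le_exp.mpr (by nlinarith))
    hWint (.of_forall fun ω => (hW ω).1) (.of_forall fun ω => (hW ω).2)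
    fun s hs => measureReal_exp_mul_contrast_gt_le hm hYtail hs
  rw [probReal_univ, ← exp_sub, log_exp] at hE
  have hbound : ∫ ω, exp (m * (|Y ω| - |Y ω - θ|)) ∂μ ≤ (1 + θ * m) * exp (-(θ * m)) := by
    linarith
  exact ⟨hbound, sub_log_one_add_le_neg_log (integral_exp_pos hWint) hbound⟩

/-- Median estimation (LAD contrast). Let `Y` have median `0`,
symmetric distribution, with `P(Y > y) = e^{-2yλ(y)}/2` for `y ≥ 0`, where
`λ` is positive and nonincreasing on `(0,∞)`. Then for `θ > 0`, with
`ℓ(y,θ,0) = |y| - |y-θ|`, one has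
`E exp{λ(θ) ℓ(Y,θ,0)} ≤ (1 + θλ(θ)) e^{-θλ(θ)}`, hence the rate function
`𝔪(θ,0) = -log E exp{λ(θ) ℓ(Y,θ,0)}` satisfies
`𝔪(θ,0) ≥ θλ(θ) - log(1 + θλ(θ))`. -/
theorem stmt17 {Ω : Type*} [MeasurableSpace Ω] (μ : Measure Ω) [IsProbabilityMeasure μ]
    (Y : Ω → ℝ) (hY : Measurable Y)
    (lam : ℝ → ℝ) (hlampos : ∀ y : ℝ, 0 < y → 0 < lam y)
    (hlammono : AntitoneOn lam (Set.Ioi (0 : ℝ)))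
    (htail : ∀ y : ℝ, 0 ≤ y →
      (μ {ω | y < Y ω}).toReal = Real.exp (-(2 * y * lam y)) / 2)
    (hsym : ∀ y : ℝ, 0 ≤ y → μ {ω | Y ω < -y} = μ {ω | y < Y ω}) :
    ∀ θ : ℝ, 0 < θ →
      (∫ ω, Real.exp (lam θ * (|Y ω| - |Y ω - θ|)) ∂μ
          ≤ (1 + θ * lam θ) * Real.exp (-(θ * lam θ))) ∧
      (θ * lam θ - Real.log (1 + θ * lam θ)
          ≤ -Real.log (∫ ω, Real.exp (lam θ * (|Y ω| - |Y ω - θ|)) ∂μ)) :=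
  stmt17_general μ Y hY lam hlampos hlammono htail
end
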